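/- arXiv:1902.09573 — 3 statements merged into one kernel-verified Lean document; each statement's English description precedes it below -/
import Mathlib

section
/- In the compactification construction, all degrees of the graph (J, Ê) are at most D, where Ê is the closure in J × J of the edge set E of a graph with maximum degree D. -/
open MeasureTheory

/-- The ball of graph radius `r` around `x` in the graph `G` (as a vertex set,
including `x` itself). -/
def gball {I : Type*} (G : I → I → Prop) (x : I) : ℕ → Set I
  | 0 => {x}
  | r + 1 => gball G x r ∪ {z | ∃ w ∈ gball G x r, G w z}

/-- An `r`-neighborhood isomorphism between `x` and `y`: a rooted isomorphism of the
graph balls `B(x,r) → B(y,r)` sending `x` to `y` (encoded as a global map that is a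
bijection between the balls preserving adjacency in both directions). -/
def IsNbhdIso {I : Type*} (G : I → I → Prop) (r : ℕ) (x y : I) (φ : I → I) : Prop :=
  φ x = y ∧ Set.BijOn φ (gball G x r) (gball G y r) ∧
    ∀ u ∈ gball G x r, ∀ v ∈ gball G x r, (G u v ↔ G (φ u) (φ v))

/-- The displacement `d₀(φ) = sup_{z ∈ B(x,r)} d₀(z, φ(z))` of a neighborhood map. -/
noncomputable def disp {I : Type*} [MetricSpace I] (G : I → I → Prop) (x : I) (r : ℕ)
    (φ : I → I) : ℝ :=
  ⨆ z : gball G x r, dist (z : I) (φ z)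

/-- The neighborhood-isomorphism metric
`d(x,y) = inf over r and r-neighborhood isomorphisms φ of max {1/(r+1), d₀(φ)}`. -/
noncomputable def nbhdDist {I : Type*} [MetricSpace I] (G : I → I → Prop) (x y : I) : ℝ :=
  sInf {m | ∃ (r : ℕ) (φ : I → I), IsNbhdIso G r x y φ ∧
    m = max (1 / ((r : ℝ) + 1)) (disp G x r φ)}

/-- `degIn G B x` is the number of neighbors of `x` in `B`. -/
noncomputable def degIn {I : Type*} (G : I → I → Prop) (B : Set I) (x : I) : ℕ :=
  {y | y ∈ B ∧ G x y}.ncard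

/-- The vertex set of the connected component of `x`. -/
def compSet {I : Type*} (G : I → I → Prop) (x : I) : Set I := {y | Relation.ReflTransGen G x y}

section helpers
variable {I : Type*} {G : I → I → Prop}

lemma self_mem_gball (x : I) : ∀ r, x ∈ gball G x r
  | 0 => rfl
  | r+1 => Or.inl (self_mem_gball x r)

lemma gball_succ_subset (x : I) (r : ℕ) : gball G x r ⊆ gball G x (r+1) :=
  Set.subset_union_left

lemma gball_mono (x : I) {k r : ℕ} (h : k ≤ r) : gball G x k ⊆ gball G x r := by
  induction h with
  | refl => exact subset_rfl
  | step _ ih => exact ih.trans (gball_succ_subset x _)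

lemma mem_gball_one {a c : I} (h : G a c) : c ∈ gball G a 1 :=
  Or.inr ⟨a, rfl, h⟩

lemma gball_trans {a c : I} {k : ℕ} (hc : c ∈ gball G a k) :
    ∀ m, gball G c m ⊆ gball G a (k + m) := by
  intro m
  induction m with
  | zero => intro z hz; rw [show z = c from hz]; exact hc
  | succ m ih =>
    rintro z (hz | ⟨w, hw, hwz⟩)
    · exact gball_succ_subset a _ (ih hz)
    · exact Or.inr ⟨w, ih hw, hwz⟩

lemma gball_image {r : ℕ} {a a' : I} {φ : I → I} (h : IsNbhdIso G r a a' φ)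
    {c : I} {k : ℕ} (hc : c ∈ gball G a k) :
    ∀ m, k + m ≤ r → ∀ z ∈ gball G c m, φ z ∈ gball G (φ c) m := by
  intro m
  induction m with
  | zero => intro _ z hz; rw [show z = c from hz]; rfl
  | succ m ih =>
    rintro hm z (hz | ⟨w, hw, hwz⟩)
    · exact gball_succ_subset _ _ (ih (by omega) z hz)
    · refine Or.inr ⟨φ w, ih (by omega) w hw, ?_⟩
      have hwa : w ∈ gball G a r := gball_mono a (by omega) (gball_trans hc m hw)
      have hza : z ∈ gball G a r := gball_mono a (by omega) (gball_trans hc (m+1) (Or.inr ⟨w, hw, hwz⟩))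
      exact (h.2.2 w hwa z hza).1 hwz

lemma gball_image' {r : ℕ} {a a' : I} {φ : I → I} (h : IsNbhdIso G r a a' φ)
    {k : ℕ} (hk : k ≤ r) : ∀ z ∈ gball G a k, φ z ∈ gball G a' k := by
  have := gball_image h (self_mem_gball a 0) k (by omega)
  rwa [h.1] at this

lemma gball_preimage {r : ℕ} {a a' : I} {φ : I → I} (h : IsNbhdIso G r a a' φ)
    {c : I} {k : ℕ} (hc : c ∈ gball G a k) :
    ∀ m, k + m ≤ r → ∀ z' ∈ gball G (φ c) m, ∀ z ∈ gball G a r, φ z = z' → z ∈ gball G c m := by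
  intro m
  induction m with
  | zero =>
    intro _ z' hz' z hz hφz
    have : z' = φ c := hz'
    have hca : c ∈ gball G a r := gball_mono a (by omega) hc
    have : z = c := h.2.1.2.1 hz hca (by rw [hφz, this])
    rw [this]; rfl
  | succ m ih =>
    rintro hm z' (hz' | ⟨w', hw', hwz'⟩) z hz hφz
    · exact gball_succ_subset _ _ (ih (by omega) z' hz' z hz hφz)
    · -- w' ∈ gball (φ c) m ⊆ gball a' (k+m) ⊆ gball a' r
      have hφc : φ c ∈ gball G a' k := gball_image' h (by omega) c hc
      have hw'a : w' ∈ gball G a' r :=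
        gball_mono a' (by omega) (gball_trans hφc m hw')
      obtain ⟨w, hw, hφw⟩ := h.2.1.2.2 hw'a
      have hwc : w ∈ gball G c m := ih (by omega) w' hw' w hw hφw
      refine Or.inr ⟨w, hwc, ?_⟩
      have := (h.2.2 w hw z hz).2
      rw [hφw, hφz] at this
      exact this hwz'

lemma iso_restrict {n : ℕ} {a a' : I} {φ : I → I} (h : IsNbhdIso G (n+1) a a' φ)
    {c : I} (hc : c ∈ gball G a 1) : IsNbhdIso G n c (φ c) φ := by
  refine ⟨rfl, ⟨?_, ?_, ?_⟩, ?_⟩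
  · exact fun z hz => gball_image h hc n (by omega) z hz
  · exact fun z hz w hw hzw =>
      h.2.1.2.1 (gball_mono a (by omega) (gball_trans hc n hz))
        (gball_mono a (by omega) (gball_trans hc n hw)) hzw
  · intro z' hz'
    have hφc : φ c ∈ gball G a' 1 := gball_image' h (by omega) c hc
    have : z' ∈ gball G a' (n+1) := gball_mono a' (by omega) (gball_trans hφc n hz')
    obtain ⟨z, hz, hφz⟩ := h.2.1.2.2 this
    exact ⟨z, gball_preimage h hc n (by omega) z' hz' z hz hφz, hφz⟩
  · intro u hu v hv
    exact h.2.2 u (gball_mono a (by omega) (gball_trans hc n hu))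
      v (gball_mono a (by omega) (gball_trans hc n hv))

end helpers

section metric
variable {I : Type*} [MetricSpace I] {G : I → I → Prop}

lemma disp_le_disp (hdiam : ∀ x y : I, dist x y ≤ 1) {a c : I} {r m : ℕ} (φ : I → I)
    (hsub : gball G c m ⊆ gball G a r) : disp G c m φ ≤ disp G a r φ := by
  have hne : Nonempty (gball G c m) := ⟨⟨c, self_mem_gball c m⟩⟩
  have hbdd : BddAbove (Set.range fun z : gball G a r => dist (z : I) (φ z)) := by
    refine ⟨1, ?_⟩; rintro _ ⟨z, rfl⟩; exact hdiam _ _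
  exact ciSup_le fun z => le_ciSup_of_le hbdd ⟨(z : I), hsub z.2⟩ le_rfl

lemma nbhdDist_bddBelow (x y : I) :
    BddBelow {m | ∃ (r : ℕ) (φ : I → I), IsNbhdIso G r x y φ ∧
      m = max (1 / ((r : ℝ) + 1)) (disp G x r φ)} := by
  refine ⟨0, ?_⟩
  rintro m ⟨r, φ, _, rfl⟩
  exact le_trans (by positivity) (le_max_left _ _)

lemma nbhdDist_le {x y : I} {r : ℕ} {φ : I → I} (h : IsNbhdIso G r x y φ) :
    nbhdDist G x y ≤ max (1 / ((r : ℝ) + 1)) (disp G x r φ) :=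
  csInf_le (nbhdDist_bddBelow x y) ⟨r, φ, h, rfl⟩

lemma nbhdDist_lt (hirr : Irreflexive G) {x y : I} {η : ℝ} (h : nbhdDist G x y < η) :
    ∃ (r : ℕ) (φ : I → I), IsNbhdIso G r x y φ ∧
      max (1 / ((r : ℝ) + 1)) (disp G x r φ) < η := by
  have hne : {m | ∃ (r : ℕ) (φ : I → I), IsNbhdIso G r x y φ ∧
      m = max (1 / ((r : ℝ) + 1)) (disp G x r φ)}.Nonempty := by
    refine ⟨_, 0, fun _ => y, ⟨rfl, ⟨?_, ?_, ?_⟩, ?_⟩, rfl⟩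
    · intro z hz; exact self_mem_gball y 0
    · intro z hz w hw _; rw [show z = x from hz, show w = x from hw]
    · intro z hz; exact ⟨x, self_mem_gball x 0, (show z = y from hz).symm⟩
    · intro u hu v hv
      rw [show u = x from hu, show v = x from hv]
      exact iff_of_false (hirr x) (hirr y)
  obtain ⟨m, ⟨r, φ, hiso, rfl⟩, hm⟩ := (csInf_lt_iff (nbhdDist_bddBelow x y) hne).1 h
  exact ⟨r, φ, hiso, hm⟩

end metric

lemma neighbor_transfer {I : Type*} [MetricSpace I] {G : I → I → Prop}
    (hdiam : ∀ x y : I, dist x y ≤ 1) (hirr : Irreflexive G)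
    {a₀ a b : I} (hab : G a b) {δ : ℝ} (hδ : 0 < δ)
    (h : nbhdDist G a₀ a < 2 * δ) (h2 : 2 * δ < 1 / 2) :
    ∃ c : I, G a₀ c ∧ nbhdDist G c b < 4 * δ := by
  obtain ⟨r, φ, hiso, hmax⟩ := nbhdDist_lt hirr h
  have hr1 : 1 / ((r : ℝ) + 1) < 2 * δ := lt_of_le_of_lt (le_max_left _ _) hmax
  have hdisp : disp G a₀ r φ < 2 * δ := lt_of_le_of_lt (le_max_right _ _) hmax
  have hrpos : 1 ≤ r := by
    by_contra hcon
    have : r = 0 := by omega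
    rw [this] at hr1
    norm_num at hr1
    linarith
  obtain ⟨n, rfl⟩ : ∃ n, r = n + 1 := ⟨r - 1, by omega⟩
  have hb : b ∈ gball G a (n + 1) := gball_mono a (by omega) (mem_gball_one hab)
  obtain ⟨c, hc, hφc⟩ := hiso.2.1.2.2 hb
  have hGc : G a₀ c := by
    have := (hiso.2.2 a₀ (self_mem_gball a₀ _) c hc).2
    rw [hiso.1, hφc] at this
    exact this hab
  have hc1 : c ∈ gball G a₀ 1 := mem_gball_one hGc
  have hres : IsNbhdIso G n c b φ := by
    have := iso_restrict hiso hc1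
    rwa [hφc] at this
  refine ⟨c, hGc, lt_of_le_of_lt (nbhdDist_le hres) (max_lt ?_ ?_)⟩
  · have hkey : (1 : ℝ) / ((n : ℝ) + 1) ≤ 2 * (1 / ((n : ℝ) + 1 + 1)) := by
      rw [mul_one_div, div_le_div_iff₀ (by positivity) (by positivity)]
      nlinarith [Nat.cast_nonneg (α := ℝ) n]
    push_cast at hr1
    calc (1 : ℝ) / ((n : ℝ) + 1) ≤ 2 * (1 / ((n : ℝ) + 1 + 1)) := hkey
      _ < 2 * (2 * δ) := by nlinarith [hr1]
      _ = 4 * δ := by ring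
  · have hsub : gball G c n ⊆ gball G a₀ (n + 1) := by
      have := gball_trans hc1 n
      rwa [show 1 + n = n + 1 by omega] at this
    calc disp G c n φ ≤ disp G a₀ (n+1) φ := disp_le_disp hdiam φ hsub
      _ < 2 * δ := hdisp
      _ < 4 * δ := by linarith


/-- all degrees of the graph `(J, Ê)` on the completion are at most `D`. -/
theorem stmt7 {I : Type*} [MetricSpace I] [CompactSpace I] (hdiam : ∀ x y : I, dist x y ≤ 1)
    (G : I → I → Prop) (hsym : Symmetric G) (hirr : Irreflexive G)
    (D : ℕ) (hfin : ∀ x : I, {y | G x y}.Finite) (hdeg : ∀ x : I, {y | G x y}.ncard ≤ D)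
    (J : Type*) [MetricSpace J] [CompleteSpace J] (f : I → J)
    (hiso : ∀ x y : I, dist (f x) (f y) = nbhdDist G x y)
    (hdense : DenseRange f)
    (Ehat : Set (J × J))
    (hEhat : Ehat = closure {p : J × J | ∃ a b : I, G a b ∧ p = (f a, f b)}) :
    ∀ x : J, ∀ s : Finset J, (∀ y ∈ s, (x, y) ∈ Ehat) → s.card ≤ D := by
  classical
  intro x s hs
  rcases s.eq_empty_or_nonempty with rfl | ⟨y₀, hy₀⟩
  · simp
  -- separation constant
  obtain ⟨ε, hε, hsep⟩ : ∃ ε > 0, ∀ y ∈ s, ∀ z ∈ s, y ≠ z → ε ≤ dist y z := by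
    set t := (s ×ˢ s).filter (fun p => p.1 ≠ p.2) with ht
    rcases t.eq_empty_or_nonempty with hte | htne
    · refine ⟨1, one_pos, fun y hy z hz hne => absurd ?_ (Finset.notMem_empty (y, z))⟩
      rw [← hte, ht]
      exact Finset.mem_filter.2 ⟨Finset.mem_product.2 ⟨hy, hz⟩, hne⟩
    · set img := t.image (fun p => dist p.1 p.2) with himg
      have himgne : img.Nonempty := htne.image _
      refine ⟨img.min' himgne, ?_, ?_⟩
      · obtain ⟨p, hp, hpe⟩ := Finset.mem_image.1 (img.min'_mem himgne)
        rw [← hpe]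
        exact dist_pos.2 (Finset.mem_filter.1 hp).2
      · intro y hy z hz hne
        exact Finset.min'_le _ _ (Finset.mem_image.2 ⟨(y, z),
          Finset.mem_filter.2 ⟨Finset.mem_product.2 ⟨hy, hz⟩, hne⟩, rfl⟩)
  set δ : ℝ := min (ε / 11) (1 / 7) with hδdef
  have hδ : 0 < δ := lt_min (by positivity) (by norm_num)
  have hδ7 : δ ≤ 1 / 7 := min_le_right _ _
  have hδε : δ ≤ ε / 11 := min_le_left _ _
  -- approximations
  have H : ∀ y : J, y ∈ s → ∃ a b : I, G a b ∧ dist x (f a) < δ ∧ dist y (f b) < δ := by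
    intro y hy
    have hmem := hs y hy
    rw [hEhat] at hmem
    obtain ⟨p, hp, hdp⟩ := Metric.mem_closure_iff.1 hmem δ hδ
    obtain ⟨a, b, hab, rfl⟩ := hp
    rw [Prod.dist_eq] at hdp
    exact ⟨a, b, hab, (max_lt_iff.1 hdp).1, (max_lt_iff.1 hdp).2⟩
  choose A B hG hA hB using H
  set a₀ := A y₀ hy₀ with ha₀
  -- get a common neighbor point for each y ∈ s
  have H2 : ∀ y : J, y ∈ s → ∃ c : I, G a₀ c ∧ dist y (f c) < 5 * δ := by
    intro y hy
    have hnd : nbhdDist G a₀ (A y hy) < 2 * δ := by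
      rw [← hiso]
      calc dist (f a₀) (f (A y hy)) ≤ dist (f a₀) x + dist x (f (A y hy)) := dist_triangle _ _ _
        _ < δ + δ := add_lt_add (by rw [dist_comm]; exact hA y₀ hy₀) (hA y hy)
        _ = 2 * δ := by ring
    obtain ⟨c, hGc, hcb⟩ := neighbor_transfer hdiam hirr (hG y hy) hδ hnd (by linarith)
    refine ⟨c, hGc, ?_⟩
    calc dist y (f c) ≤ dist y (f (B y hy)) + dist (f (B y hy)) (f c) := dist_triangle _ _ _
      _ < δ + 4 * δ := by
          refine add_lt_add (hB y hy) ?_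
          rw [dist_comm, hiso]
          exact hcb
      _ = 5 * δ := by ring
  choose C hGC hC using H2
  -- injective map into neighbors of a₀
  classical
  set g : J → I := fun y => if h : y ∈ s then C y h else a₀ with hg
  have hmaps : ∀ y ∈ s, g y ∈ (hfin a₀).toFinset := by
    intro y hy
    rw [hg]
    simp only [dif_pos hy, Set.Finite.mem_toFinset]
    exact hGC y hy
  have hinj : ∀ y ∈ s, ∀ z ∈ s, g y = g z → y = z := by
    intro y hy z hz hgyz
    by_contra hne
    rw [hg] at hgyz
    simp only [dif_pos hy, dif_pos hz] at hgyz
    have : dist y z ≤ dist y (f (C y hy)) + dist (f (C z hz)) z := by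
      rw [hgyz]
      exact dist_triangle_left y z (f (C z hz)) |>.trans (by rw [dist_comm (f (C z hz)) y])
    have h1 : dist y z < 10 * δ := by
      have := hC y hy
      have := hC z hz
      rw [dist_comm] at this
      linarith [hC y hy, hC z hz, dist_triangle y (f (C y hy)) z,
        dist_comm (f (C z hz)) z]
    have h2 : ε ≤ dist y z := hsep y hy z hz hne
    linarith
  calc s.card ≤ (hfin a₀).toFinset.card := Finset.card_le_card_of_injOn g hmaps hinj
    _ = {y | G a₀ y}.ncard := (Set.ncard_eq_toFinset_card _ (hfin a₀)).symm
    _ ≤ D := hdeg a₀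
end

section
/- Let G = (I, d, E, λ) be a compact graphing and S the support of λ. Then no edge of G connects a point of S to a point of I \ S; consequently the restriction of G to S is a full subgraphing of G. -/
open MeasureTheory

/-- The (topological) support of a measure: points all of whose open neighborhoods have
positive measure. -/
def measSupport {I : Type*} [TopologicalSpace I] [MeasurableSpace I]
    (μ : MeasureTheory.Measure I) : Set I :=
  {x | ∀ U : Set I, IsOpen U → x ∈ U → μ U ≠ 0}


/-!
Write `S` for the support of `λ`. Suppose `x ∈ S` has a neighbour `y ∉ S`, and let `U` be a
null open neighbourhood of `y`. Neighbourhood isomorphisms of radius one with small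
displacement carry the neighbours of `x` lying in `U` to neighbours of nearby points lying in
`U`, so `deg_U` is lower semicontinuous; hence `deg_U ≥ 1` on an open neighbourhood of `x`,
which has positive measure since `x ∈ S`. But `S` is conull, so measure preservation gives
`∫ deg_U dλ = ∫_S deg_U dλ = ∫_U deg_S dλ = 0`, a contradiction.
-/

open Filter Topology

section Graph

variable {I : Type*} (G : I → I → Prop)

lemma mem_gball_self (x : I) (r : ℕ) : x ∈ gball G x r := by
  induction r with
  | zero => exact rfl
  | succ n ih => exact Or.inl ih

lemma mem_gball_one_of_adj {x y : I} (h : G x y) : y ∈ gball G x 1 := Or.inr ⟨x, rfl, h⟩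

lemma degIn_le_degIn_of_isNbhdIso {B : Set I} {x y : I} {φ : I → I}
    (hφ : IsNbhdIso G 1 x y φ) (hB : ∀ z ∈ B, G x z → φ z ∈ B) (hfin : {z | G y z}.Finite) :
    degIn G B x ≤ degIn G B y := by
  obtain ⟨hφx, hbij, hadj⟩ := hφ
  have hsub : {z | z ∈ B ∧ G x z} ⊆ gball G x 1 := fun z hz => mem_gball_one_of_adj G hz.2
  have himage : φ '' {z | z ∈ B ∧ G x z} ⊆ {z | z ∈ B ∧ G y z} := by
    rintro _ ⟨z, ⟨hzB, hxz⟩, rfl⟩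
    refine ⟨hB z hzB hxz, hφx ▸ ?_⟩
    exact (hadj x (mem_gball_self G x 1) z (hsub ⟨hzB, hxz⟩)).1 hxz
  calc degIn G B x = (φ '' {z | z ∈ B ∧ G x z}).ncard := ((hbij.injOn.mono hsub).ncard_image).symm
    _ ≤ degIn G B y := Set.ncard_le_ncard himage (hfin.subset fun _ hz => hz.2)

lemma degIn_le_of_finite {B : Set I} {x : I} (hfin : {y | G x y}.Finite) :
    degIn G B x ≤ {y | G x y}.ncard :=
  Set.ncard_le_ncard (fun _ hy => hy.2) hfin

variable [MetricSpace I]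

lemma lowerSemicontinuous_degIn (hfin : ∀ x : I, {y | G x y}.Finite)
    (hiso : ∀ ε > (0:ℝ), ∃ δ > (0:ℝ), ∀ x y : I, dist x y ≤ δ →
      ∃ φ : I → I, IsNbhdIso G 1 x y φ ∧ ∀ z ∈ gball G x 1, dist z (φ z) ≤ ε)
    {U : Set I} (hU : IsOpen U) : LowerSemicontinuous (degIn G U) := by
  intro x k hk
  set F := {y | y ∈ U ∧ G x y}
  obtain ⟨ε, hε, hεU⟩ : ∃ ε, 0 < ε ∧ Metric.cthickening ε F ⊆ U :=
    ((hfin x).subset fun _ hy => hy.2).isCompact.exists_cthickening_subset_open hU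
      fun _ hy => hy.1
  obtain ⟨δ, hδ, hδiso⟩ := hiso ε hε
  filter_upwards [Metric.closedBall_mem_nhds x hδ] with x' hx'
  obtain ⟨φ, hφ, hdisp⟩ := hδiso x x' (by rw [dist_comm]; exact hx')
  refine hk.trans_le (degIn_le_degIn_of_isNbhdIso G hφ (fun z hzU hxz => hεU ?_) (hfin x'))
  exact Metric.mem_cthickening_of_dist_le _ z ε F ⟨hzU, hxz⟩
    (by rw [dist_comm]; exact hdisp z (mem_gball_one_of_adj G hxz))

end Graph

lemma measSupport_eq_support {I : Type*} [TopologicalSpace I] [MeasurableSpace I]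
    (μ : Measure I) : measSupport μ = μ.support := by
  simp only [measSupport, Measure.support_eq_forall_isOpen, pos_iff_ne_zero]
  grind

lemma mem_measSupport_of_adj {I : Type*} [MetricSpace I] [HereditarilyLindelofSpace I]
    [MeasurableSpace I] [OpensMeasurableSpace I] (G : I → I → Prop)
    (D : ℕ) (hfin : ∀ x : I, {y | G x y}.Finite) (hdeg : ∀ x : I, {y | G x y}.ncard ≤ D)
    (hiso : ∀ ε > (0:ℝ), ∃ δ > (0:ℝ), ∀ x y : I, dist x y ≤ δ →
      ∃ φ : I → I, IsNbhdIso G 1 x y φ ∧ ∀ z ∈ gball G x 1, dist z (φ z) ≤ ε)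
    (μ : Measure I) [IsFiniteMeasure μ]
    (hMP : ∀ A B : Set I, MeasurableSet A → MeasurableSet B →
      ∫ x in A, (degIn G B x : ℝ) ∂μ = ∫ x in B, (degIn G A x : ℝ) ∂μ)
    {x y : I} (hxy : G x y) (hx : x ∈ measSupport μ) : y ∈ measSupport μ := by
  rw [measSupport_eq_support] at hx ⊢
  by_contra hy
  rw [← Set.mem_compl_iff, Measure.compl_support_eq_sUnion] at hy
  obtain ⟨U, ⟨hUopen, hU0⟩, hyU⟩ := hy
  have hlsc := lowerSemicontinuous_degIn G hfin hiso hUopen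
  set f : I → ℝ := fun z => (degIn G U z : ℝ)
  have hf_int : Integrable f μ :=
    Integrable.of_bound (measurable_from_top.comp hlsc.measurable).aestronglyMeasurable D
      (Eventually.of_forall fun z => by
        simpa [f] using (degIn_le_of_finite G (hfin z)).trans (hdeg z))
  have hS_full : μ.restrict μ.support = μ :=
    Measure.restrict_eq_self_of_ae_mem Measure.support_mem_ae
  have hf_zero : f =ᵐ[μ] 0 := by
    refine (integral_eq_zero_iff_of_nonneg (fun z => Nat.cast_nonneg _) hf_int).1 ?_
    rw [← hS_full, hMP _ _ Measure.isClosed_support.measurableSet hUopen.measurableSet,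
      Measure.restrict_eq_zero.2 hU0, integral_zero_measure]
  -- `{z | 0 < deg_U z}` is an open neighbourhood of `x` on which `f` does not vanish
  have hpos : 0 < μ (degIn G U ⁻¹' Set.Ioi 0) :=
    (Measure.mem_support_iff_forall x).1 hx _ ((hlsc.isOpen_preimage 0).mem_nhds
      ((Set.ncard_pos ((hfin x).subset fun _ hz => hz.2)).2 ⟨y, hyU, hxy⟩))
  refine hpos.ne' (measure_mono_null (fun z hz => ?_) (ae_iff.1 hf_zero))
  simpa [f, Nat.pos_iff_ne_zero] using hz

theorem stmt9_general {I : Type*} [MetricSpace I] [CompactSpace I] [MeasurableSpace I] [BorelSpace I]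
    (G : I → I → Prop) (hsym : Symmetric G)
    (D : ℕ) (hfin : ∀ x : I, {y | G x y}.Finite) (hdeg : ∀ x : I, {y | G x y}.ncard ≤ D)
    (hC3 : ∀ ε > (0:ℝ), ∀ r : ℕ, ∃ δ > (0:ℝ), ∀ x y : I, dist x y ≤ δ →
      ∃ φ : I → I, IsNbhdIso G r x y φ ∧ ∀ z ∈ gball G x r, dist z (φ z) ≤ ε)
    (μ : Measure I) [IsProbabilityMeasure μ]
    (hMP : ∀ A B : Set I, MeasurableSet A → MeasurableSet B →
      ∫ x in A, (degIn G B x : ℝ) ∂μ = ∫ x in B, (degIn G A x : ℝ) ∂μ) :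
    (∀ x y : I, G x y → (x ∈ measSupport μ ↔ y ∈ measSupport μ)) ∧
    μ (measSupport μ) = 1 := by
  have hiso := fun ε hε => hC3 ε hε 1
  have hadj {x y : I} : G x y → x ∈ measSupport μ → y ∈ measSupport μ :=
    mem_measSupport_of_adj G D hfin hdeg hiso μ hMP
  refine ⟨fun x y hxy => ⟨hadj hxy, hadj (hsym hxy)⟩, ?_⟩
  rw [measSupport_eq_support]
  exact (prob_compl_eq_zero_iff Measure.isClosed_support.measurableSet).1
    Measure.measure_compl_support

/-- in a compact graphing no edge connects the support `S` of `λ` to its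
complement; consequently the restriction to `S` is a full subgraphing (`S` is a union of
components of full measure). -/
theorem stmt9 {I : Type*} [MetricSpace I] [CompactSpace I] [MeasurableSpace I] [BorelSpace I]
    (G : I → I → Prop) (hsym : Symmetric G) (hirr : Irreflexive G)
    (D : ℕ) (hfin : ∀ x : I, {y | G x y}.Finite) (hdeg : ∀ x : I, {y | G x y}.ncard ≤ D)
    (hclosed : IsClosed {p : I × I | G p.1 p.2})
    (hC3 : ∀ ε > (0:ℝ), ∀ r : ℕ, ∃ δ > (0:ℝ), ∀ x y : I, dist x y ≤ δ →
      ∃ φ : I → I, IsNbhdIso G r x y φ ∧ ∀ z ∈ gball G x r, dist z (φ z) ≤ ε)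
    (μ : Measure I) [IsProbabilityMeasure μ]
    (hMP : ∀ A B : Set I, MeasurableSet A → MeasurableSet B →
      ∫ x in A, (degIn G B x : ℝ) ∂μ = ∫ x in B, (degIn G A x : ℝ) ∂μ) :
    (∀ x y : I, G x y → (x ∈ measSupport μ ↔ y ∈ measSupport μ)) ∧
    μ (measSupport μ) = 1 :=
  stmt9_general G hsym D hfin hdeg hC3 μ hMP
end

section
/- Let G = (I, d, E, λ) be a compact graphing. For every positive integer t there is ε > 0 such that any two distinct points x, y ∈ I at graph distance at most t satisfy d(x,y) ≥ ε. -/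
open MeasureTheory

/-!
Near a point `u`, condition (C3) carries every pair `x ≠ y` with `y ∈ B(x,t)` to a pair
`u ≠ φ y` inside the finite ball `B(u,t)`, with `x` and `y` each moved very little. The points
of `B(u,t) \ {u}` stay at a positive distance `η` from `u`, so for `x` close to `u` the triangle
inequality gives `d(x,y) ≥ η/2`. Compactness turns these local bounds into a uniform one.
-/

open Filter Topology

theorem CompactSpace.exists_pos_forall_of_eventually {X : Type*} [TopologicalSpace X]
    [CompactSpace X] {P : ℝ → X → Prop} (hP : ∀ ε ε' x, ε' ≤ ε → P ε x → P ε' x)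
    (hloc : ∀ u, ∃ ε > 0, ∀ᶠ x in 𝓝 u, P ε x) : ∃ ε > 0, ∀ x, P ε x := by
  set U : ℕ → Set X := fun n => interior {x | P (1 / ((n : ℝ) + 1)) x}
  have hcover : Set.univ ⊆ ⋃ n, U n := by
    intro u _
    obtain ⟨ε, hε, hev⟩ := hloc u
    obtain ⟨n, hn⟩ := exists_nat_one_div_lt hε
    exact Set.mem_iUnion.2 ⟨n, mem_interior_iff_mem_nhds.2 <|
      hev.mono fun x hx => hP _ _ x hn.le hx⟩
  have hmono : Monotone U := fun m n hmn => interior_mono fun x hx =>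
    hP _ _ x (Nat.one_div_le_one_div hmn) hx
  obtain ⟨n, hn⟩ := isCompact_univ.elim_directed_cover U (fun _ => isOpen_interior) hcover
    hmono.directed_le
  exact ⟨1 / ((n : ℝ) + 1), Nat.one_div_pos_of_nat,
    fun x => interior_subset (hn (Set.mem_univ x))⟩

theorem Set.Finite.exists_pos_le_dist {X : Type*} [MetricSpace X] {S : Set X}
    (hS : S.Finite) (u : X) : ∃ η > 0, ∀ v ∈ S, v ≠ u → η ≤ dist v u := by
  obtain ⟨η, hη, hball⟩ := Metric.isOpen_iff.1 (hS.sdiff (t := {u})).isClosed.isOpen_compl u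
    (fun hu => hu.2 rfl)
  exact ⟨η, hη, fun v hv hvu => not_lt.1 fun hlt => hball (Metric.mem_ball.2 hlt) ⟨hv, hvu⟩⟩

section Graphing

variable {I : Type*} {G : I → I → Prop}

lemma gball_self_mem (x : I) : ∀ r : ℕ, x ∈ gball G x r
  | 0 => rfl
  | r + 1 => Or.inl (gball_self_mem x r)

lemma gball_finite (hfin : ∀ x : I, {y | G x y}.Finite) (x : I) :
    ∀ r : ℕ, (gball G x r).Finite
  | 0 => Set.finite_singleton x
  | r + 1 => by
    have ih := gball_finite hfin x r
    have hstep : {z | ∃ w ∈ gball G x r, G w z} = ⋃ w ∈ gball G x r, {z | G w z} := by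
      ext z; simp
    exact ih.union (hstep ▸ ih.biUnion fun w _ => hfin w)

lemma IsNbhdIso.apply_mem {r : ℕ} {x y z : I} {φ : I → I} (h : IsNbhdIso G r x y φ)
    (hz : z ∈ gball G x r) : φ z ∈ gball G y r :=
  h.2.1.mapsTo hz

lemma IsNbhdIso.apply_ne_root {r : ℕ} {x y z : I} {φ : I → I} (h : IsNbhdIso G r x y φ)
    (hz : z ∈ gball G x r) (hzx : z ≠ x) : φ z ≠ y := fun hφz =>
  hzx <| h.2.1.injOn hz (gball_self_mem x r) (hφz.trans h.1.symm)

theorem exists_pos_eventually_forall_gball_le_dist [MetricSpace I]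
    (hfin : ∀ x : I, {y | G x y}.Finite) {t : ℕ}
    (hC3 : ∀ ε > (0:ℝ), ∃ δ > (0:ℝ), ∀ x y : I, dist x y ≤ δ →
      ∃ φ : I → I, IsNbhdIso G t x y φ ∧ ∀ z ∈ gball G x t, dist z (φ z) ≤ ε) (u : I) :
    ∃ ε > (0:ℝ), ∀ᶠ x in 𝓝 u, ∀ y, x ≠ y → y ∈ gball G x t → ε ≤ dist x y := by
  obtain ⟨η, hη, hsep⟩ := (gball_finite hfin u t).exists_pos_le_dist u
  obtain ⟨δ, hδ, hC⟩ := hC3 (η / 4) (by positivity)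
  refine ⟨η / 2, by positivity, ?_⟩
  filter_upwards [Metric.ball_mem_nhds u (lt_min hδ (by positivity : 0 < η / 4))]
    with x hxu y hxy hy
  obtain ⟨hxδ, hxη⟩ := lt_min_iff.1 (Metric.mem_ball.1 hxu)
  obtain ⟨φ, hφ, hdisp⟩ := hC x u hxδ.le
  have hfar : η ≤ dist (φ y) u :=
    hsep _ (hφ.apply_mem hy) (hφ.apply_ne_root hy (Ne.symm hxy))
  have hy_close : dist (φ y) y ≤ η / 4 := dist_comm y (φ y) ▸ hdisp y hy
  have := dist_triangle4 (φ y) y x u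
  rw [dist_comm y x] at this
  linarith

end Graphing

theorem stmt10_general {I : Type*} [MetricSpace I] [CompactSpace I]
    (G : I → I → Prop)
    (hfin : ∀ x : I, {y | G x y}.Finite)
    (hC3 : ∀ ε > (0:ℝ), ∀ r : ℕ, ∃ δ > (0:ℝ), ∀ x y : I, dist x y ≤ δ →
      ∃ φ : I → I, IsNbhdIso G r x y φ ∧ ∀ z ∈ gball G x r, dist z (φ z) ≤ ε) :
    ∀ t : ℕ, 0 < t → ∃ ε > (0:ℝ), ∀ x y : I, x ≠ y → y ∈ gball G x t → ε ≤ dist x y := by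
  intro t _
  exact CompactSpace.exists_pos_forall_of_eventually
    (fun ε ε' x hε h y hxy hy => hε.trans (h y hxy hy))
    (exists_pos_eventually_forall_gball_le_dist hfin fun ε hε => hC3 ε hε t)

/-- in a compact graphing, for every `t` there is `ε > 0` such that distinct
points at graph distance at most `t` are at metric distance at least `ε`. -/
theorem stmt10 {I : Type*} [MetricSpace I] [CompactSpace I] [MeasurableSpace I] [BorelSpace I]
    (G : I → I → Prop) (hsym : Symmetric G) (hirr : Irreflexive G)
    (D : ℕ) (hfin : ∀ x : I, {y | G x y}.Finite) (hdeg : ∀ x : I, {y | G x y}.ncard ≤ D)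
    (hclosed : IsClosed {p : I × I | G p.1 p.2})
    (hC3 : ∀ ε > (0:ℝ), ∀ r : ℕ, ∃ δ > (0:ℝ), ∀ x y : I, dist x y ≤ δ →
      ∃ φ : I → I, IsNbhdIso G r x y φ ∧ ∀ z ∈ gball G x r, dist z (φ z) ≤ ε)
    (μ : Measure I) [IsProbabilityMeasure μ]
    (hMP : ∀ A B : Set I, MeasurableSet A → MeasurableSet B →
      ∫ x in A, (degIn G B x : ℝ) ∂μ = ∫ x in B, (degIn G A x : ℝ) ∂μ) :
    ∀ t : ℕ, 0 < t → ∃ ε > (0:ℝ), ∀ x y : I, x ≠ y → y ∈ gball G x t → ε ≤ dist x y :=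
  stmt10_general G hfin hC3
end
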